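/- For every infinite paperfolding sequence, every factor of its run-length sequence of length at least 2 can be extended on the right to a factor by at most two distinct letters; that is, no factor of length ≥ 2 is followed by all three letters 1, 2, 3 at different occurrences. -/

import Mathlib

/-- Paperfolding word; instructions are given with the most recent (last) instruction first. -/
def foldAux : List ℤ → List ℤ
  | [] => []
  | a :: f => foldAux f ++ a :: (foldAux f).reverse.map (fun x => -x)

/-- `paper f` is the finite paperfolding word `P_f` for instructions `f = [f_0, f_1, …]`,
satisfying `P_ε = ε` and `P_{f·a} = P_f · a · (-P_f^R)`. -/
def paper (f : List ℤ) : List ℤ := foldAux f.reverse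

/-- The sequence of lengths of the maximal runs (maximal blocks of equal symbols) of `w`. -/
def runLengths (w : List ℤ) : List ℕ := (w.splitBy (fun a b => a == b)).map List.length

/-- `p` (indexed from 1) is the infinite paperfolding sequence with instructions `f`,
i.e. every finite paperfolding word of a prefix of `f` is a prefix of `p`. -/
def IsLimit (f : ℕ → ℤ) (p : ℕ → ℤ) : Prop :=
  ∀ m k, k < (paper ((List.range m).map f)).length →
    p (k + 1) = (paper ((List.range m).map f)).getD k 0

/-- `E` enumerates, in increasing order (`E 1 < E 2 < ⋯`, with the convention `E 0 = 0`),
the ending positions of the maximal runs of the sequence `p` (indexed from 1):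
position `m ≥ 1` ends a run iff `p m ≠ p (m+1)`. -/
def IsRunEnds (p : ℕ → ℤ) (E : ℕ → ℕ) : Prop :=
  E 0 = 0 ∧ StrictMono E ∧ ∀ m, 1 ≤ m → ((∃ n, 1 ≤ n ∧ E n = m) ↔ p m ≠ p (m + 1))

/-!
The finite words satisfy the classical second recursion: `P_{a·g}` interleaves
`a, -a, a, -a, …` with `P_g`. Hence the odd positions of the limit alternate in sign, and so do
the positions `≡ 2 (mod 4)`. The first fact puts exactly one run end in each pair `{2s+1, 2s+2}`,
so the `r`-th run ends at `2r - 1 + b_r` with `b_r ∈ {0, 1}` and the `r`-th run length is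
`2 + b_r - b_{r-1}`; the second gives `b_{2m+1} ≠ b_{2m+3}`, so `222` is not a factor.
Along two occurrences of a factor followed by `1` and by `3`, the difference of the bits is constant
and equals `1` at the end, which forces every bit of the first occurrence to be `1`: the factor is
`2^n`. An occurrence followed by `2` would then contain `2^(n+1)` with `n + 1 ≥ 3`.
-/

lemma foldAux_cons (a : ℤ) (L : List ℤ) :
    foldAux (a :: L) = foldAux L ++ a :: (foldAux L).reverse.map (fun x => -x) := rfl

lemma foldAux_length (L : List ℤ) : (foldAux L).length = 2 ^ L.length - 1 := by
  induction L with
  | nil => rfl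
  | cons a L ih =>
    have : 0 < 2 ^ L.length := Nat.two_pow_pos _
    simp only [foldAux_cons, List.length_append, List.length_cons, List.length_map,
      List.length_reverse, ih, pow_succ]
    omega

lemma mem_foldAux {L : List ℤ} {x : ℤ} (hx : x ∈ foldAux L) : x ∈ L ∨ -x ∈ L := by
  induction L generalizing x with
  | nil => simp [foldAux] at hx
  | cons a L ih =>
    simp only [foldAux_cons, List.mem_append, List.mem_cons, List.mem_map,
      List.mem_reverse] at hx
    rcases hx with hx | rfl | ⟨y, hy, rfl⟩
    · rcases ih hx with h | h <;> simp [h]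
    · simp
    · rcases ih hy with h | h <;> simp [h]

section FoldAuxCons

variable (a : ℤ) (L : List ℤ) {i : ℕ}

lemma foldAux_cons_getD_of_lt (h : i < (foldAux L).length) :
    (foldAux (a :: L)).getD i 0 = (foldAux L).getD i 0 := by
  rw [foldAux_cons, List.getD_append _ _ _ _ h]

lemma foldAux_cons_getD_length : (foldAux (a :: L)).getD (foldAux L).length 0 = a := by
  rw [foldAux_cons, List.getD_append_right _ _ _ _ le_rfl, Nat.sub_self, List.getD_cons_zero]

lemma foldAux_cons_getD_reflect (h : i < (foldAux L).length) :
    (foldAux (a :: L)).getD (2 * (foldAux L).length - i) 0 = -(foldAux L).getD i 0 := by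
  have hidx : 2 * (foldAux L).length - i - (foldAux L).length =
      ((foldAux L).length - 1 - i) + 1 := by omega
  rw [foldAux_cons, List.getD_append_right _ _ _ _ (by omega), hidx, List.getD_cons_succ,
    List.getD_eq_getElem _ _ (by simp; omega), List.getD_eq_getElem _ _ h]
  simp only [List.getElem_map, List.getElem_reverse]
  congr 2; omega

lemma foldAux_cons_getD_of_length_lt (h : 2 * (foldAux L).length < i) :
    (foldAux (a :: L)).getD i 0 = 0 :=
  List.getD_eq_default _ _ (by simp [foldAux_cons]; omega)

end FoldAuxCons

lemma foldAux_append_singleton_length (L : List ℤ) (a : ℤ) :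
    (foldAux (L ++ [a])).length = 2 * (foldAux L).length + 1 := by
  have : 0 < 2 ^ L.length := Nat.two_pow_pos _
  simp only [foldAux_length, List.length_append, List.length_singleton, pow_succ]
  omega

lemma foldAux_append_singleton_getD_odd (L : List ℤ) (a : ℤ) (q : ℕ) :
    (foldAux (L ++ [a])).getD (2 * q + 1) 0 = (foldAux L).getD q 0 := by
  induction L generalizing q with
  | nil => simp [foldAux]
  | cons b L ih =>
    have hW := foldAux_append_singleton_length L a
    rw [List.cons_append]
    rcases lt_trichotomy q (foldAux L).length with hq | rfl | hq
    · rw [foldAux_cons_getD_of_lt _ _ (by omega), foldAux_cons_getD_of_lt _ _ hq, ih]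
    · rw [← hW, foldAux_cons_getD_length, foldAux_cons_getD_length]
    · by_cases hq' : q ≤ 2 * (foldAux L).length
      · obtain ⟨r, hr, rfl⟩ : ∃ r < (foldAux L).length, q = 2 * (foldAux L).length - r :=
          ⟨2 * (foldAux L).length - q, by omega, by omega⟩
        have hidx : 2 * (2 * (foldAux L).length - r) + 1 =
            2 * (foldAux (L ++ [a])).length - (2 * r + 1) := by omega
        rw [hidx, foldAux_cons_getD_reflect _ _ (by omega), foldAux_cons_getD_reflect _ _ hr, ih]
      · rw [foldAux_cons_getD_of_length_lt _ _ (by omega),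
          foldAux_cons_getD_of_length_lt _ _ (by omega)]

lemma foldAux_append_singleton_getD_even (L : List ℤ) (a : ℤ) {q : ℕ}
    (hq : 2 * q < (foldAux (L ++ [a])).length) :
    (foldAux (L ++ [a])).getD (2 * q) 0 = (-1) ^ q * a := by
  induction L generalizing q with
  | nil =>
    obtain rfl : q = 0 := by simp [foldAux] at hq; omega
    simp [foldAux]
  | cons b L ih =>
    have hW := foldAux_append_singleton_length L a
    have hlen : (foldAux (b :: (L ++ [a]))).length = 2 * (foldAux (L ++ [a])).length + 1 := by
      simp only [foldAux_cons, List.length_append, List.length_cons, List.length_map,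
        List.length_reverse]
      omega
    rw [List.cons_append] at hq ⊢
    by_cases hlt : 2 * q < (foldAux (L ++ [a])).length
    · rw [foldAux_cons_getD_of_lt _ _ hlt, ih hlt]
    · set n := (foldAux (L ++ [a])).length
      have hidx : 2 * q = 2 * n - 2 * (n - q) := by omega
      rw [hidx, foldAux_cons_getD_reflect _ _ (by omega), ih (by omega)]
      -- `n` is odd, so `(-1) ^ (n - q) = -(-1) ^ q`
      have hsign : (-1 : ℤ) ^ (n - q) * (-1) ^ q = -1 := by
        rw [← pow_add, Nat.sub_add_cancel (by omega), Odd.neg_one_pow ⟨_, hW⟩]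
      have hsq : ((-1 : ℤ) ^ q) ^ 2 = 1 := by rw [← pow_mul, mul_comm, pow_mul]; simp
      linear_combination (-a * (-1) ^ q) * hsign + (a * (-1) ^ (n - q)) * hsq

lemma paper_cons (a : ℤ) (g : List ℤ) : paper (a :: g) = foldAux (g.reverse ++ [a]) := by
  simp [paper]

lemma paper_length (g : List ℤ) : (paper g).length = 2 ^ g.length - 1 := by
  simp [paper, foldAux_length]

lemma paper_cons_getD_odd (a : ℤ) (g : List ℤ) (q : ℕ) :
    (paper (a :: g)).getD (2 * q + 1) 0 = (paper g).getD q 0 := by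
  rw [paper_cons, foldAux_append_singleton_getD_odd, paper]

lemma paper_cons_getD_even (a : ℤ) (g : List ℤ) {q : ℕ} (hq : 2 * q < (paper (a :: g)).length) :
    (paper (a :: g)).getD (2 * q) 0 = (-1) ^ q * a := by
  rw [paper_cons] at hq ⊢
  exact foldAux_append_singleton_getD_even _ a hq

lemma map_range_succ (f : ℕ → ℤ) (m : ℕ) :
    (List.range (m + 1)).map f = f 0 :: (List.range m).map (fun i => f (i + 1)) := by
  simp [List.range_succ_eq_map, List.map_map, Function.comp_def]

namespace IsLimit

variable {f p : ℕ → ℤ}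

lemma apply_succ (hp : IsLimit f p) {m q : ℕ} (hq : q < 2 ^ m - 1) :
    p (q + 1) = (paper ((List.range m).map f)).getD q 0 :=
  hp m q (by simpa [paper_length] using hq)

lemma apply_eq_neg_one_or_one (hp : IsLimit f p) (hf : ∀ n, f n = -1 ∨ f n = 1) (q : ℕ) :
    p (q + 1) = -1 ∨ p (q + 1) = 1 := by
  have hq : q < (paper ((List.range (q + 1)).map f)).length := by
    have := Nat.lt_two_pow_self (n := q + 1)
    simp only [paper_length, List.length_map, List.length_range]; omega
  rw [hp _ _ hq, List.getD_eq_getElem _ _ hq]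
  rcases mem_foldAux (List.getElem_mem hq) with h | h <;>
    obtain ⟨n, -, hn⟩ := List.mem_map.1 (List.mem_reverse.1 h) <;>
    rcases hf n with h' | h' <;> omega

lemma apply_odd (hp : IsLimit f p) (q : ℕ) : p (2 * q + 1) = (-1) ^ q * f 0 := by
  have := Nat.lt_two_pow_self (n := 2 * q + 1)
  rw [hp.apply_succ (m := 2 * q + 1) (by omega), map_range_succ, paper_cons_getD_even]
  simp only [paper_length, List.length_cons, List.length_map, List.length_range]; omega

lemma apply_four_mul_add_two (hp : IsLimit f p) (q : ℕ) : p (4 * q + 2) = (-1) ^ q * f 1 := by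
  have := Nat.lt_two_pow_self (n := 4 * q + 1)
  have := Nat.lt_two_pow_self (n := 4 * q + 2)
  rw [hp.apply_succ (m := 4 * q + 2) (by omega), show 4 * q + 1 = 2 * (2 * q) + 1 by ring,
    map_range_succ, paper_cons_getD_odd, map_range_succ, paper_cons_getD_even]
  simp only [paper_length, List.length_cons, List.length_map, List.length_range]; omega

lemma apply_odd_add_two (hp : IsLimit f p) (q : ℕ) : p (2 * q + 3) = -p (2 * q + 1) := by
  rw [show 2 * q + 3 = 2 * (q + 1) + 1 by ring, hp.apply_odd, hp.apply_odd, pow_succ]; ring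

lemma apply_four_mul_add_six (hp : IsLimit f p) (q : ℕ) : p (4 * q + 6) = -p (4 * q + 2) := by
  rw [show 4 * q + 6 = 4 * (q + 1) + 2 by ring, hp.apply_four_mul_add_two,
    hp.apply_four_mul_add_two, pow_succ]; ring

end IsLimit

lemma ne_iff_eq_neg_of_sign {x y : ℤ} (hx : x = -1 ∨ x = 1) (hy : y = -1 ∨ y = 1) :
    x ≠ y ↔ y = -x := by
  rcases hx with rfl | rfl <;> rcases hy with rfl | rfl <;> decide

def OneRunEndPerPair (p : ℕ → ℤ) : Prop :=
  ∀ s, p (2 * s + 1) ≠ p (2 * s + 2) ↔ p (2 * s + 2) = p (2 * s + 3)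

lemma oneRunEndPerPair_of_odd_add_two {p : ℕ → ℤ} (hpm : ∀ q, p (q + 1) = -1 ∨ p (q + 1) = 1)
    (hodd : ∀ q, p (2 * q + 3) = -p (2 * q + 1)) : OneRunEndPerPair p := by
  intro s
  rw [hodd s]; exact ne_iff_eq_neg_of_sign (hpm (2 * s)) (hpm (2 * s + 1))

/-- `1` if the `r`-th run ends at the even position `2 r`, `0` if it ends at `2 r - 1`
(and `1` for `r = 0`, as `E 0 = 0`). -/
def runEndParity (E : ℕ → ℕ) (r : ℕ) : ℕ := E r + 1 - 2 * r

namespace IsRunEnds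

variable {p : ℕ → ℤ} {E : ℕ → ℕ}

lemma apply_ne (hE : IsRunEnds p E) {r : ℕ} (hr : 1 ≤ r) : p (E r) ≠ p (E r + 1) :=
  (hE.2.2 _ (by have := hE.2.1 hr; omega)).1 ⟨r, hr, rfl⟩

lemma apply_le_two_mul_and_two_mul_le (hE : IsRunEnds p E) (hblock : OneRunEndPerPair p) (m : ℕ) :
    E m ≤ 2 * m ∧ 2 * m ≤ E m + 1 := by
  induction m with
  | zero => simp [hE.1]
  | succ m ih =>
    have hmono := hE.2.1
    obtain ⟨e, he, hpe⟩ : ∃ e, (e = 2 * m + 1 ∨ e = 2 * m + 2) ∧ p e ≠ p (e + 1) := by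
      by_cases h : p (2 * m + 1) = p (2 * m + 2)
      · exact ⟨2 * m + 2, Or.inr rfl, fun h' => (hblock m).2 h' h⟩
      · exact ⟨2 * m + 1, Or.inl rfl, h⟩
    obtain ⟨r, hr, rfl⟩ := (hE.2.2 e (by omega)).2 hpe
    have hmr : m < r := hmono.lt_iff_lt.1 (by omega)
    have hup : E (m + 1) ≤ E r := hmono.monotone hmr
    have hlt : E m < E (m + 1) := hmono (lt_add_one m)
    refine ⟨by omega, ?_⟩
    by_contra hlow
    -- otherwise runs `m` and `m + 1` both end in the block `{2 m - 1, 2 m}`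
    obtain ⟨s, rfl⟩ : ∃ s, m = s + 1 := ⟨m - 1, by omega⟩
    have h1 := hE.apply_ne (r := s + 1) (by omega)
    have h2 := hE.apply_ne (r := s + 1 + 1) (by omega)
    rw [show E (s + 1) = 2 * s + 1 by omega] at h1
    rw [show E (s + 1 + 1) = 2 * s + 2 by omega] at h2
    exact h2 ((hblock s).1 h1)

lemma runEndParity_le_one (hE : IsRunEnds p E) (hblock : OneRunEndPerPair p) (r : ℕ) :
    runEndParity E r ≤ 1 := by
  have := hE.apply_le_two_mul_and_two_mul_le hblock r
  unfold runEndParity; omega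

lemma sub_eq_two_add_runEndParity (hE : IsRunEnds p E) (hblock : OneRunEndPerPair p) (r : ℕ) :
    ((E (r + 1) - E r : ℕ) : ℤ) = 2 + runEndParity E (r + 1) - runEndParity E r := by
  have := hE.apply_le_two_mul_and_two_mul_le hblock r
  have := hE.apply_le_two_mul_and_two_mul_le hblock (r + 1)
  have := hE.2.1 (lt_add_one r)
  unfold runEndParity; omega

lemma runEndParity_succ_eq_one_iff (hE : IsRunEnds p E) (hblock : OneRunEndPerPair p) (r : ℕ) :
    runEndParity E (r + 1) = 1 ↔ p (2 * r + 2) ≠ p (2 * r + 3) := by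
  have hr := hE.apply_le_two_mul_and_two_mul_le hblock (r + 1)
  unfold runEndParity
  constructor
  · intro h
    have := hE.apply_ne (r := r + 1) le_add_self
    rwa [show E (r + 1) = 2 * r + 2 by omega] at this
  · intro h
    obtain ⟨s, hs, hEs⟩ := (hE.2.2 (2 * r + 2) (by omega)).2 h
    obtain ⟨s, rfl⟩ : ∃ s', s = s' + 1 := ⟨s - 1, by omega⟩
    have := hE.apply_le_two_mul_and_two_mul_le hblock (s + 1)
    obtain rfl : s = r := by omega
    omega

lemma runEndParity_odd_ne (hE : IsRunEnds p E) (hpm : ∀ q, p (q + 1) = -1 ∨ p (q + 1) = 1)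
    (hodd : ∀ q, p (2 * q + 3) = -p (2 * q + 1)) (hodd4 : ∀ q, p (4 * q + 6) = -p (4 * q + 2))
    (m : ℕ) : runEndParity E (2 * m + 1) ≠ runEndParity E (2 * m + 3) := by
  have hblock := oneRunEndPerPair_of_odd_add_two hpm hodd
  have h1 := hE.runEndParity_succ_eq_one_iff hblock (2 * m)
  have h3 := hE.runEndParity_succ_eq_one_iff hblock (2 * m + 2)
  rw [show 2 * (2 * m) + 2 = 4 * m + 2 by ring, show 2 * (2 * m) + 3 = 4 * m + 3 by ring] at h1
  rw [show 2 * m + 2 + 1 = 2 * m + 3 by ring, show 2 * (2 * m + 2) + 2 = 4 * m + 6 by ring,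
    show 2 * (2 * m + 2) + 3 = 4 * m + 7 by ring] at h3
  have h7 : p (4 * m + 7) = p (4 * m + 3) := by
    have h := hodd (2 * m + 2)
    have h' := hodd (2 * m + 1)
    ring_nf at h h' ⊢
    rw [h, h', neg_neg]
  have key : p (4 * m + 2) ≠ p (4 * m + 3) ↔ p (4 * m + 6) = p (4 * m + 7) := by
    rw [hodd4, h7, eq_comm]; exact ne_iff_eq_neg_of_sign (hpm _) (hpm _)
  have := hE.runEndParity_le_one hblock (2 * m + 1)
  have := hE.runEndParity_le_one hblock (2 * m + 3)
  intro h
  rw [h] at h1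
  by_cases h0 : runEndParity E (2 * m + 3) = 1 <;> tauto

end IsRunEnds

lemma apply_eq_apply_zero_of_succ_eq {α : Type*} {g : ℕ → α} {n : ℕ}
    (h : ∀ t < n, g (t + 1) = g t) {t : ℕ} (ht : t ≤ n) : g t = g 0 := by
  induction t with
  | zero => rfl
  | succ t ih => rw [h t (by omega), ih (by omega)]

section RunCode

variable {b R : ℕ → ℕ}

lemma run_eq_two_iff (hR : ∀ r, (R (r + 1) : ℤ) = 2 + b (r + 1) - b r)
    (r : ℕ) : R (r + 1) = 2 ↔ b (r + 1) = b r := by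
  have := hR r
  omega

lemma eq_two_of_extended_by_one_and_three (hb : ∀ r, b r ≤ 1)
    (hR : ∀ r, (R (r + 1) : ℤ) = 2 + b (r + 1) - b r) {i k n : ℕ}
    (hfac : ∀ t < n, R (i + t + 1) = R (k + t + 1)) (hi : R (i + n + 1) = 1)
    (hk : R (k + n + 1) = 3) {t : ℕ} (ht : t < n) : R (i + t + 1) = 2 := by
  -- equal run lengths force `b (i + t) - b (k + t)` to be constant, and it is `1` at `t = n`
  let d : ℕ → ℤ := fun t => b (i + t) - b (k + t)
  have hd : ∀ t < n, d (t + 1) = d t := by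
    intro t ht
    show (b (i + t + 1) : ℤ) - b (k + t + 1) = b (i + t) - b (k + t)
    have := hfac t ht
    have := hR (i + t)
    have := hR (k + t)
    omega
  have hdn : d n = 1 := by
    show (b (i + n) : ℤ) - b (k + n) = 1
    have := hR (i + n)
    have := hR (k + n)
    have := hb (i + n)
    have := hb (k + n + 1)
    omega
  have hone : ∀ t ≤ n, b (i + t) = 1 := by
    intro t ht
    have h : d t = 1 := hdn ▸ (apply_eq_apply_zero_of_succ_eq hd ht).trans
      (apply_eq_apply_zero_of_succ_eq hd le_rfl).symm
    have := hb (i + t)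
    simp only [d] at h
    omega
  exact (run_eq_two_iff hR _).2 ((hone (t + 1) ht).trans (hone t ht.le).symm)

lemma not_three_twos (halt : ∀ m, b (2 * m + 1) ≠ b (2 * m + 3))
    (hR : ∀ r, (R (r + 1) : ℤ) = 2 + b (r + 1) - b r) (j : ℕ) :
    ¬ (R (j + 1) = 2 ∧ R (j + 2) = 2 ∧ R (j + 3) = 2) := by
  rintro ⟨h1, h2, h3⟩
  have step := fun r => (run_eq_two_iff hR r).1
  rcases Nat.even_or_odd' j with ⟨m, rfl | rfl⟩
  · exact halt m ((step (2 * m + 1) h2).symm.trans (step (2 * m + 2) h3).symm)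
  · exact halt m ((step (2 * m + 1) h1).symm.trans (step (2 * m + 2) h2).symm)

theorem no_factor_extended_by_one_two_three (hb : ∀ r, b r ≤ 1)
    (halt : ∀ m, b (2 * m + 1) ≠ b (2 * m + 3))
    (hR : ∀ r, (R (r + 1) : ℤ) = 2 + b (r + 1) - b r) :
    ∀ n, 2 ≤ n → ¬ ∃ i j k : ℕ, 1 ≤ i ∧ 1 ≤ j ∧ 1 ≤ k ∧
      (∀ t < n, R (i + t) = R (j + t) ∧ R (j + t) = R (k + t)) ∧
      R (i + n) = 1 ∧ R (j + n) = 2 ∧ R (k + n) = 3 := by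
  rintro n hn ⟨i, j, k, hi, hj, hk, hfac, hRi, hRj, hRk⟩
  obtain ⟨i, rfl⟩ := Nat.exists_eq_add_of_le' hi
  obtain ⟨j, rfl⟩ := Nat.exists_eq_add_of_le' hj
  obtain ⟨k, rfl⟩ := Nat.exists_eq_add_of_le' hk
  simp only [Nat.add_right_comm _ 1] at hfac hRi hRj hRk
  have htwos : ∀ t < n, R (j + t + 1) = 2 := fun t ht =>
    (hfac t ht).1 ▸ eq_two_of_extended_by_one_and_three hb hR
      (fun t ht => (hfac t ht).1.trans (hfac t ht).2) hRi hRk ht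
  -- the common factor is `2 ^ n`, so `j` starts `n + 1 ≥ 3` consecutive runs of length `2`
  refine not_three_twos halt hR j ⟨htwos 0 (by omega), htwos 1 (by omega), ?_⟩
  rcases (by omega : 2 < n ∨ n = 2) with hn | rfl
  · exact htwos 2 hn
  · exact hRj

end RunCode

theorem runSeq_at_most_two_extensions (f p : ℕ → ℤ) (E : ℕ → ℕ)
    (hf : ∀ n, f n = -1 ∨ f n = 1) (hp : IsLimit f p) (hE : IsRunEnds p E)
    (R : ℕ → ℕ) (hR : ∀ k, R k = E k - E (k - 1)) :
    ∀ n, 2 ≤ n → ¬ ∃ i j k : ℕ, 1 ≤ i ∧ 1 ≤ j ∧ 1 ≤ k ∧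
      (∀ t < n, R (i + t) = R (j + t) ∧ R (j + t) = R (k + t)) ∧
      R (i + n) = 1 ∧ R (j + n) = 2 ∧ R (k + n) = 3 := by
  have hpm := hp.apply_eq_neg_one_or_one hf
  have hblock := oneRunEndPerPair_of_odd_add_two hpm hp.apply_odd_add_two
  refine no_factor_extended_by_one_two_three (b := runEndParity E)
    (hE.runEndParity_le_one hblock)
    (hE.runEndParity_odd_ne hpm hp.apply_odd_add_two hp.apply_four_mul_add_six) fun r => ?_
  rw [hR, Nat.add_sub_cancel]
  exact hE.sub_eq_two_add_runEndParity hblock r
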